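/- For j ≥ 3, the parametric index Φ^a with a = (j−2,...,j−2) differs from Φ: for the point-veto game u^b with b = (1, j−1, 0, ..., 0) one has Φ^a(u^b) = (0, 1, 0, ..., 0) while Φ(u^b) = (1/j, (j−1)/j, 0, ..., 0). -/

import Mathlib

open Finset BigOperators

attribute [local instance] Classical.propDecidable

noncomputable section

variable {n j k : ℕ}

/-- The top element `j-1` of `Fin j`. -/
def topF (j : ℕ) [NeZero j] : Fin j :=
  ⟨j - 1, Nat.sub_lt (Nat.pos_of_ne_zero (NeZero.ne j)) one_pos⟩

/-- The profile equal to the constant `c` on `S` and to `x` off `S`. -/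
def mer (S : Finset (Fin n)) (c : Fin j) (x : Fin n → Fin j) : Fin n → Fin j :=
  fun i => if i ∈ S then c else x i

/-- `(j,k)` simple game: `v 0 = 0`, `v (j-1,…,j-1) = k-1`, monotone. -/
def IsJKGame [NeZero j] [NeZero k] (v : (Fin n → Fin j) → Fin k) : Prop :=
  v (fun _ => 0) = 0 ∧ v (fun _ => topF j) = topF k ∧
    ∀ x y : Fin n → Fin j, (∀ i, x i ≤ y i) → v x ≤ v y

/-- The `(j,k)` simple game with point-veto `a`. -/
def uA [NeZero j] [NeZero k] (a : Fin n → Fin j) (x : Fin n → Fin j) : Fin k :=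
  if ∀ i, a i ≤ x i then topF k else 0

/-- The veto game associated with a set `E` of thresholds. -/
def uE [NeZero j] [NeZero k] (E : Set (Fin n → Fin j)) (x : Fin n → Fin j) : Fin k :=
  if ∃ a ∈ E, ∀ i, a i ≤ x i then topF k else 0

/-- Player `i` is a null player of `v`. -/
def NullPlayer [NeZero j] [NeZero k] (v : (Fin n → Fin j) → Fin k) (i : Fin n) : Prop :=
  ∀ (x : Fin n → Fin j) (y : Fin j), v x = v (Function.update x i y)

/-- Players `i` and `h` are equivalent in `v`. -/
def EquivPlayers [NeZero j] [NeZero k] (v : (Fin n → Fin j) → Fin k) (i h : Fin n) : Prop :=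
  ∀ x : Fin n → Fin j, v x = v (x ∘ Equiv.swap i h)

/-- The average game `ṽ(T) = (1/(jⁿ(k-1))) Σ_x [v((j-1)_T, x_{-T}) - v(0_T, x_{-T})]`. -/
def Cfun [NeZero j] [NeZero k] (v : (Fin n → Fin j) → Fin k) (T : Finset (Fin n)) : ℝ :=
  (1 / ((j : ℝ) ^ n * ((k : ℝ) - 1))) *
    ∑ x : Fin n → Fin j,
      (((v (mer T (topF j) x)).val : ℝ) - ((v (mer T 0 x)).val : ℝ))

/-- The Shapley-Shubik index for `(j,k)` simple games. -/
def Phi [NeZero j] [NeZero k] (v : (Fin n → Fin j) → Fin k) (i : Fin n) : ℝ :=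
  ∑ S ∈ univ.filter (fun S : Finset (Fin n) => i ∈ S),
    ((Nat.factorial (S.card - 1) * Nat.factorial (n - S.card) : ℝ) / (Nat.factorial n : ℝ)) *
      (Cfun v S - Cfun v (S.erase i))

/-- The TU game `v_a(S) = (1/(k-1))[v((j-1)_S, a_{-S}) - v(0_S, a_{-S})]`. -/
def vAgame [NeZero j] [NeZero k] (v : (Fin n → Fin j) → Fin k) (a : Fin n → Fin j)
    (S : Finset (Fin n)) : ℝ :=
  (1 / ((k : ℝ) - 1)) * (((v (mer S (topF j) a)).val : ℝ) - ((v (mer S 0 a)).val : ℝ))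

/-- The parametric power index `Φ^a`. -/
def PhiA [NeZero j] [NeZero k] (v : (Fin n → Fin j) → Fin k) (a : Fin n → Fin j) (i : Fin n) : ℝ :=
  ∑ S ∈ univ.filter (fun S : Finset (Fin n) => i ∈ S),
    ((Nat.factorial (S.card - 1) * Nat.factorial (n - S.card) : ℝ) / (Nat.factorial n : ℝ)) *
      (vAgame v a S - vAgame v a (S.erase i))

/-- The game `w^C`: value `k-1` iff all members of `C` give full support. -/
def wCgame [NeZero j] [NeZero k] (C : Finset (Fin n)) : (Fin n → Fin j) → Fin k :=
  uA (fun i => if i ∈ C then topF j else 0)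

/-- The unanimity TU game `γ_S`. -/
def gammaTU (S T : Finset (Fin n)) : ℝ :=
  if S ⊆ T then 1 else 0

end

/-!
Both indices are Shapley values of TU games: `Φ^a` of `v_a` and `Φ` of the average game
`C(v, ·)`. For the point-veto game `u^b`, player `1` is the only one whose demand `b 1 = j-1`
exceeds the reference level `a 1 = j-2`, so `v_a` is the unanimity game of player `1` alone.
Averaging over profiles factorises over the players, each free player `i` contributing the count
`j - b i` of levels meeting its demand; this makes the average game
`(1/j) γ_{0} + ((j-1)/j) γ_{1}`. Linearity of the Shapley value and its value on dictator games
give both formulas.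
-/

section Shapley

variable {n : ℕ}

noncomputable def shapleyWeight (n : ℕ) (S : Finset (Fin n)) : ℝ :=
  ((Nat.factorial (S.card - 1) * Nat.factorial (n - S.card) : ℝ) / (Nat.factorial n : ℝ))

noncomputable def shapleyValue (w : Finset (Fin n) → ℝ) (i : Fin n) : ℝ :=
  ∑ S ∈ univ.filter (fun S : Finset (Fin n) => i ∈ S), shapleyWeight n S * (w S - w (S.erase i))

lemma sum_filter_mem_eq_sum_powerset_erase {α β : Type*} [Fintype α] [DecidableEq α]
    [AddCommMonoid β] (i : α) (f : Finset α → β) :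
    ∑ S ∈ univ.filter (fun S : Finset α => i ∈ S), f S =
      ∑ T ∈ (univ.erase i).powerset, f (insert i T) := by
  have hi : i ∉ univ.erase i := notMem_erase i univ
  have huniv : (univ : Finset (Finset α)) = (insert i (univ.erase i)).powerset := by
    rw [insert_erase (mem_univ i), powerset_univ]
  rw [sum_filter, huniv, sum_powerset_insert hi]
  have hout : ∀ T ∈ (univ.erase i).powerset, (if i ∈ T then f T else 0) = 0 := fun T hT =>
    if_neg fun h => hi (mem_powerset.1 hT h)
  rw [sum_eq_zero hout, zero_add]
  exact sum_congr rfl fun T _ => if_pos (mem_insert_self i T)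

lemma choose_mul_factorial_mul_factorial_div_factorial {m : ℕ} (hm : m < n) :
    ((n - 1).choose m : ℝ) * (Nat.factorial m * Nat.factorial (n - 1 - m) / Nat.factorial n) =
      1 / n := by
  have hchoose := Nat.choose_mul_factorial_mul_factorial (Nat.le_sub_one_of_lt hm)
  have hfact : Nat.factorial n = n * Nat.factorial (n - 1) := by
    rw [← Nat.mul_factorial_pred (by omega)]
  have hpos : ((n - 1).choose m : ℝ) ≠ 0 := by
    exact_mod_cast (Nat.choose_pos (Nat.le_sub_one_of_lt hm)).ne'
  rw [hfact, ← hchoose]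
  push_cast
  field_simp

lemma sum_shapleyWeight (i : Fin n) :
    ∑ S ∈ univ.filter (fun S : Finset (Fin n) => i ∈ S), shapleyWeight n S = 1 := by
  have hn : 0 < n := i.pos
  have hweight : ∀ T ∈ (univ.erase i).powerset, shapleyWeight n (insert i T) =
      Nat.factorial T.card * Nat.factorial (n - 1 - T.card) / Nat.factorial n := by
    intro T hT
    have hiT : i ∉ T := fun h => notMem_erase i univ (mem_powerset.1 hT h)
    rw [shapleyWeight, card_insert_of_notMem hiT, Nat.add_sub_cancel, Nat.sub_sub, add_comm 1]
  have hcard : (univ.erase i).card = n - 1 := by simp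
  rw [sum_filter_mem_eq_sum_powerset_erase, sum_congr rfl hweight,
    sum_powerset_apply_card (fun m => (Nat.factorial m * Nat.factorial (n - 1 - m) /
      Nat.factorial n : ℝ)), hcard, Nat.sub_add_cancel hn]
  rw [sum_congr rfl fun m hm => (nsmul_eq_mul _ _).trans
    (choose_mul_factorial_mul_factorial_div_factorial (mem_range.1 hm))]
  simp [hn.ne']

lemma shapleyValue_add_smul (c d : ℝ) (w w' : Finset (Fin n) → ℝ) (i : Fin n) :
    shapleyValue (c • w + d • w') i = c * shapleyValue w i + d * shapleyValue w' i := by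
  simp only [shapleyValue, mul_sum, ← sum_add_distrib, Pi.add_apply, Pi.smul_apply, smul_eq_mul]
  exact sum_congr rfl fun S _ => by ring

lemma shapleyValue_gammaTU_singleton (p i : Fin n) :
    shapleyValue (gammaTU {p}) i = if i = p then 1 else 0 := by
  split_ifs with hip
  · subst hip
    rw [← sum_shapleyWeight i]
    refine sum_congr rfl fun S hS => ?_
    simp [gammaTU, (mem_filter.1 hS).2]
  · refine sum_eq_zero fun S _ => ?_
    simp [gammaTU, Ne.symm hip]

end Shapley

lemma sum_fin_ite_le {j : ℕ} (c : Fin j) :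
    ∑ y : Fin j, (if c ≤ y then (1 : ℝ) else 0) = j - c.val := by
  rw [sum_boole, filter_le_eq_Ici, Fin.card_Ici, Nat.cast_sub c.isLt.le]

section PointVeto

variable {n j k : ℕ} [NeZero j] [NeZero k]

lemma PhiA_eq_shapleyValue (v : (Fin n → Fin j) → Fin k)
    (a : Fin n → Fin j) (i : Fin n) : PhiA v a i = shapleyValue (vAgame v a) i := rfl

lemma Phi_eq_shapleyValue (v : (Fin n → Fin j) → Fin k) (i : Fin n) :
    Phi v i = shapleyValue (Cfun v) i := rfl

lemma le_topF (c : Fin j) : c ≤ topF j :=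
  Fin.le_def.2 (Nat.le_sub_one_of_lt c.isLt)

lemma uA_val_cast (b x : Fin n → Fin j) :
    ((uA b x : Fin k).val : ℝ) = ((k : ℝ) - 1) * ∏ i, if b i ≤ x i then (1 : ℝ) else 0 := by
  rw [Fintype.prod_boole, uA]
  split_ifs
  · simp [topF, Nat.cast_pred (Nat.pos_of_neZero k)]
  · simp

lemma sum_uA_mer (b : Fin n → Fin j) (T : Finset (Fin n)) (c : Fin j) :
    ∑ x, ((uA b (mer T c x) : Fin k).val : ℝ) =
      ((k : ℝ) - 1) * ∏ i, if i ∈ T then (if b i ≤ c then (j : ℝ) else 0) else j - (b i).val := by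
  simp only [uA_val_cast, ← mul_sum]
  congr 1
  refine (Fintype.prod_sum fun i y =>
    if b i ≤ (if i ∈ T then c else y) then (1 : ℝ) else 0).symm.trans ?_
  refine prod_congr rfl fun i _ => ?_
  by_cases hiT : i ∈ T
  · simp [hiT]
  · simpa [hiT] using sum_fin_ite_le (b i)

lemma Cfun_uA (hk : 1 < k) (b : Fin n → Fin j) (T : Finset (Fin n)) :
    Cfun (uA b : (Fin n → Fin j) → Fin k) T =
      (∏ i, (if i ∈ T then (j : ℝ) else j - (b i).val) / j) -
        ∏ i, (if i ∈ T then (if b i = 0 then (j : ℝ) else 0) else j - (b i).val) / j := by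
  have hk' : (k : ℝ) - 1 ≠ 0 := sub_ne_zero.2 (by exact_mod_cast hk.ne')
  have hj : (j : ℝ) ≠ 0 := by exact_mod_cast NeZero.ne j
  rw [Cfun, sum_sub_distrib, sum_uA_mer, sum_uA_mer, prod_div_distrib, prod_div_distrib,
    prod_const, card_univ, Fintype.card_fin]
  simp only [le_topF, if_true, nonpos_iff_eq_zero]
  field_simp

lemma vAgame_uA_eq_gammaTU (hk : 1 < k) {b a : Fin n → Fin j} {p : Fin n} (hp : a p < b p)
    (hle : ∀ i, i ≠ p → b i ≤ a i) (S : Finset (Fin n)) :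
    vAgame (uA b : (Fin n → Fin j) → Fin k) a S = gammaTU {p} S := by
  have hk' : (k : ℝ) - 1 ≠ 0 := sub_ne_zero.2 (by exact_mod_cast hk.ne')
  have htop : (∀ i, b i ≤ mer S (topF j) a i) ↔ p ∈ S := by
    refine ⟨fun h => by_contra fun hpS => ?_, fun hpS i => ?_⟩
    · exact (h p).not_gt (by simpa [mer, hpS] using hp)
    · by_cases hiS : i ∈ S
      · simpa [mer, hiS] using le_topF (b i)
      · simpa [mer, hiS] using hle i (ne_of_mem_of_not_mem hpS hiS).symm
  have hbot : ¬ ∀ i, b i ≤ mer S 0 a i := fun h => by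
    by_cases hpS : p ∈ S
    · exact (h p).not_gt (by simpa [mer, hpS] using (Fin.zero_le (a p)).trans_lt hp)
    · exact (h p).not_gt (by simpa [mer, hpS] using hp)
  rw [vAgame, uA_val_cast, uA_val_cast, Fintype.prod_boole, Fintype.prod_boole, if_neg hbot]
  by_cases hpS : p ∈ S
  · simp [gammaTU, htop, hpS, hk']
  · simp [gammaTU, htop, hpS]

lemma Cfun_uA_eq_of_pair (hk : 1 < k) (hj : 1 < j) {b : Fin n → Fin j} {p q : Fin n}
    (hpq : p ≠ q) (hbp : b p = 1) (hbq : b q = topF j) (hb : ∀ i, i ≠ p → i ≠ q → b i = 0)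
    (T : Finset (Fin n)) :
    Cfun (uA b : (Fin n → Fin j) → Fin k) T =
      1 / j * gammaTU {p} T + ((j : ℝ) - 1) / j * gammaTU {q} T := by
  have hj0 : (j : ℝ) ≠ 0 := by exact_mod_cast NeZero.ne j
  have hbp' : ((b p).val : ℝ) = 1 := by
    rw [hbp, Fin.val_one', Nat.mod_eq_of_lt hj, Nat.cast_one]
  have hbq' : ((b q).val : ℝ) = j - 1 := by
    rw [hbq, topF, Nat.cast_pred (NeZero.pos j)]
  rw [Cfun_uA hk, Fintype.prod_eq_mul p q hpq, Fintype.prod_eq_mul p q hpq]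
  · have hbp0 : b p ≠ 0 := fun h => by simp [h] at hbp'
    have hbq0 : b q ≠ 0 := by
      rw [hbq, Ne, Fin.ext_iff, Fin.val_zero]
      exact Nat.sub_ne_zero_of_lt hj
    have hsum : (j : ℝ)⁻¹ + (j - 1) / j = 1 := by
      field_simp
      ring
    by_cases hpT : p ∈ T <;> by_cases hqT : q ∈ T <;>
      simp [gammaTU, hpT, hqT, hbp0, hbq0, hbp', hbq', hj0, hsum]
  all_goals exact fun i hi => by simp [hb i hi.1 hi.2, hj0]

end PointVeto

theorem stmt9 {n j k : ℕ} [NeZero n] [NeZero j] [NeZero k]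
    (hn : 2 ≤ n) (hj : 3 ≤ j) (hk : 2 ≤ k)
    (b : Fin n → Fin j)
    (hb : b = fun i => if i = 0 then (1 : Fin j) else if i = 1 then topF j else 0)
    (a : Fin n → Fin j) (ha : a = fun _ => (⟨j - 2, by omega⟩ : Fin j)) :
    (∀ i : Fin n, PhiA (uA b : (Fin n → Fin j) → Fin k) a i = if i = 1 then 1 else 0) ∧
    (∀ i : Fin n, Phi (uA b : (Fin n → Fin j) → Fin k) i =
        if i = 0 then 1 / (j : ℝ) else if i = 1 then ((j : ℝ) - 1) / j else 0) := by
  have h01 : (0 : Fin n) ≠ 1 := by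
    rw [Ne, Fin.ext_iff, Fin.val_zero, Fin.val_one', Nat.mod_eq_of_lt hn]
    exact zero_ne_one
  have hb0 : b 0 = 1 := by simp [hb]
  have hb1 : b 1 = topF j := by simp [hb, h01.symm]
  have hbo : ∀ i, i ≠ 0 → i ≠ 1 → b i = 0 := fun i h0 h1 => by simp [hb, h0, h1]
  have ha1 : a 1 < b 1 := by
    rw [ha, hb1, Fin.lt_def]
    exact Nat.sub_lt_sub_left (by omega) one_lt_two
  have hle : ∀ i, i ≠ 1 → b i ≤ a i := by
    intro i hi1
    by_cases hi0 : i = 0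
    · rw [hi0, hb0, ha, Fin.le_def, Fin.val_one', Nat.mod_eq_of_lt (by omega)]
      exact Nat.le_sub_of_add_le hj
    · rw [hbo i hi0 hi1]
      exact Fin.zero_le (a i)
  have hvA : vAgame (uA b : (Fin n → Fin j) → Fin k) a = gammaTU {1} :=
    funext (vAgame_uA_eq_gammaTU hk ha1 hle)
  have hC : Cfun (uA b : (Fin n → Fin j) → Fin k) =
      (1 / j : ℝ) • gammaTU {0} + (((j : ℝ) - 1) / j) • gammaTU {1} :=
    funext (Cfun_uA_eq_of_pair hk (by omega) h01 hb0 hb1 hbo)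
  refine ⟨fun i => ?_, fun i => ?_⟩
  · rw [PhiA_eq_shapleyValue, hvA, shapleyValue_gammaTU_singleton]
  · rw [Phi_eq_shapleyValue, hC, shapleyValue_add_smul, shapleyValue_gammaTU_singleton,
      shapleyValue_gammaTU_singleton]
    by_cases hi0 : i = 0
    · simp [hi0, h01]
    · simp [hi0]
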